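/- Let B be an n×n complex matrix and (x_1,...,x_n) a uniformly random permutation of v_1,...,v_n with ∑ v_j² = 1. Define N_l = ∑_{j=1}^n B_{jj}(E[x_j²|F_l] − E[x_j²|F_{l−1}]). Then for 1 ≤ l ≤ n−1, N_l = (B_{ll} − (1/(n−l))∑_{j=l+1}^n B_{jj})·(x_l² − (1 − ∑_{k=1}^{l−1} x_k²)/(n−l+1)). -/

import Mathlib

open MeasureTheory Finset

noncomputable section

/-- The symmetric group `S_n` carries the discrete σ-algebra. -/
instance permMeasurableSpace (n : ℕ) : MeasurableSpace (Equiv.Perm (Fin n)) := ⊤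

/-- The uniform probability measure on the permutations of `{1,...,n}`. -/
def permMeasure (n : ℕ) : Measure (Equiv.Perm (Fin n)) :=
  (PMF.uniformOfFintype (Equiv.Perm (Fin n))).toMeasure

instance (n : ℕ) : IsProbabilityMeasure (permMeasure n) :=
  PMF.toMeasure.isProbabilityMeasure _

/-- `F_l`, the σ-field generated by the first `l` samples `x_i = v (σ i)` of a uniformly
random permutation `(x_1,…,x_n) = (v_{σ(1)},…,v_{σ(n)})` of the values `v_1,…,v_n`. -/
def sampleFiltration (n l : ℕ) (h : l ≤ n) (v : Fin n → ℝ) :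
    MeasurableSpace (Equiv.Perm (Fin n)) :=
  MeasurableSpace.comap (fun σ => fun i : Fin l => v (σ (Fin.castLE h i))) inferInstance

namespace MDQDAux
open scoped ENNReal Classical

instance (n : ℕ) : MeasurableSingletonClass (Equiv.Perm (Fin n)) :=
  ⟨fun _ => MeasurableSpace.measurableSet_top⟩

variable {n : ℕ} (v : Fin n → ℝ)

lemma meas_phi (l : ℕ) (h : l ≤ n) :
    Measurable[sampleFiltration n l h v]
      (fun σ : Equiv.Perm (Fin n) => fun i : Fin l => v (σ (Fin.castLE h i))) :=
  measurable_iff_comap_le.2 le_rfl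

lemma comp' {α β γ : Type*} {m : MeasurableSpace α} [MeasurableSpace β] [MeasurableSpace γ]
    {f : α → β} {g : β → γ} (hg : Measurable g) (hf : Measurable[m] f) :
    Measurable[m] (fun x => g (f x)) := fun _ ht => hf (hg ht)

lemma meas_comp_phi (l : ℕ) (h : l ≤ n) {F : (Fin l → ℝ) → ℝ} (hF : Measurable F) :
    Measurable[sampleFiltration n l h v]
      (fun σ : Equiv.Perm (Fin n) => F (fun i : Fin l => v (σ (Fin.castLE h i)))) :=
  comp' hF (meas_phi v l h)

lemma meas_coord (l : ℕ) (h : l ≤ n) (j : Fin n) (hj : (j : ℕ) < l) :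
    Measurable[sampleFiltration n l h v]
      (fun σ : Equiv.Perm (Fin n) => v (σ j) ^ 2) :=
  meas_comp_phi v l h (F := fun y => (y ⟨(j : ℕ), hj⟩) ^ 2)
    ((measurable_pi_apply _).pow_const 2)

lemma sampleFiltration_le (l : ℕ) (h : l ≤ n) :
    sampleFiltration n l h v ≤ permMeasurableSpace n := le_top

lemma mem_of_agree {l : ℕ} {h : l ≤ n} {s : Set (Equiv.Perm (Fin n))}
    (hs : MeasurableSet[sampleFiltration n l h v] s) {σ τ : Equiv.Perm (Fin n)}
    (hagree : ∀ i : Fin l, v (σ (Fin.castLE h i)) = v (τ (Fin.castLE h i))) :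
    σ ∈ s ↔ τ ∈ s := by
  obtain ⟨t, -, rfl⟩ := hs
  simp only [Set.mem_preimage]
  rw [show (fun i : Fin l => v (σ (Fin.castLE h i))) = fun i => v (τ (Fin.castLE h i)) from
    funext hagree]


/-- the running remainder function -/
def glow (l : ℕ) : Equiv.Perm (Fin n) → ℝ := fun σ =>
  (1 - ∑ k ∈ univ.filter (fun k : Fin n => (k : ℕ) < l), v (σ k) ^ 2) / ((n : ℝ) - l)

lemma filter_eq_map (l : ℕ) (h : l ≤ n) :
    univ.filter (fun k : Fin n => (k : ℕ) < l) = univ.map (Fin.castLEEmb h) := by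
  ext k
  simp only [mem_filter, mem_univ, true_and, mem_map, Fin.castLEEmb_apply]
  constructor
  · intro hk
    exact ⟨⟨(k : ℕ), hk⟩, rfl⟩
  · rintro ⟨i, -, rfl⟩
    exact lt_of_lt_of_le i.isLt le_rfl

lemma sum_first (l : ℕ) (h : l ≤ n) (σ : Equiv.Perm (Fin n)) :
    ∑ k ∈ univ.filter (fun k : Fin n => (k : ℕ) < l), v (σ k) ^ 2
      = ∑ i : Fin l, v (σ (Fin.castLE h i)) ^ 2 := by
  rw [filter_eq_map l h, Finset.sum_map]
  rfl

lemma meas_glow (l : ℕ) (h : l ≤ n) :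
    Measurable[sampleFiltration n l h v] (glow v l) := by
  have : glow v l = fun σ =>
      (fun y : Fin l → ℝ => (1 - ∑ i : Fin l, (y i) ^ 2) / ((n : ℝ) - l))
        (fun i : Fin l => v (σ (Fin.castLE h i))) := by
    funext σ
    simp only [glow, sum_first v l h σ]
  rw [this]
  exact meas_comp_phi v l h
    ((measurable_const.sub (Finset.measurable_sum _
      (fun i _ => (measurable_pi_apply i).pow_const 2))).div_const _)

lemma sum_swap_eq {l : ℕ} {h : l ≤ n} {s : Set (Equiv.Perm (Fin n))}
    (hs : MeasurableSet[sampleFiltration n l h v] s) (j j' : Fin n)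
    (hj : l ≤ (j : ℕ)) (hj' : l ≤ (j' : ℕ)) :
    ∑ σ ∈ univ.filter (· ∈ s), v (σ j) ^ 2
      = ∑ σ ∈ univ.filter (· ∈ s), v (σ j') ^ 2 := by
  have hmem : ∀ σ : Equiv.Perm (Fin n), σ ∈ s ↔ σ * Equiv.swap j j' ∈ s := by
    intro σ
    refine mem_of_agree v hs (fun i => ?_)
    have hne : Fin.castLE h i ≠ j := by
      intro e
      have he := congrArg Fin.val e
      rw [Fin.coe_castLE] at he
      have hi := i.isLt
      omega
    have hne' : Fin.castLE h i ≠ j' := by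
      intro e
      have he := congrArg Fin.val e
      rw [Fin.coe_castLE] at he
      have hi := i.isLt
      omega
    simp [Equiv.Perm.mul_apply, Equiv.swap_apply_of_ne_of_ne hne hne']
  refine Finset.sum_nbij' (i := fun σ => σ * Equiv.swap j j')
    (j := fun σ => σ * Equiv.swap j j') ?_ ?_ ?_ ?_ ?_
  · intro σ hσ
    simp only [mem_filter, mem_univ, true_and] at hσ ⊢
    exact (hmem σ).1 hσ
  · intro σ hσ
    simp only [mem_filter, mem_univ, true_and] at hσ ⊢
    exact (hmem _).2 (by simpa [mul_assoc] using hσ)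
  · intro σ _; simp [mul_assoc]
  · intro σ _; simp [mul_assoc]
  · intro σ _
    simp [Equiv.Perm.mul_apply, Equiv.swap_apply_right]

lemma setIntegral_eq_sum (f : Equiv.Perm (Fin n) → ℝ) (s : Set (Equiv.Perm (Fin n))) :
    ∫ x in s, f x ∂(permMeasure n)
      = ((Fintype.card (Equiv.Perm (Fin n)) : ℝ))⁻¹ * ∑ σ ∈ univ.filter (· ∈ s), f σ := by
  rw [integral_fintype Integrable.of_finite, Finset.mul_sum, Finset.sum_filter]
  refine Finset.sum_congr rfl (fun σ _ => ?_)
  have hsm : MeasurableSet s := MeasurableSpace.measurableSet_top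
  rw [Measure.real, Measure.restrict_apply (measurableSet_singleton σ)]
  by_cases hσ : σ ∈ s
  · rw [Set.inter_eq_self_of_subset_left (Set.singleton_subset_iff.2 hσ), if_pos hσ]
    rw [show permMeasure n {σ} = ((Fintype.card (Equiv.Perm (Fin n)) : ℝ≥0∞))⁻¹ by
      rw [permMeasure, PMF.toMeasure_apply_singleton _ _ (measurableSet_singleton σ),
        PMF.uniformOfFintype_apply]]
    simp [ENNReal.toReal_inv, smul_eq_mul]
  · rw [if_neg hσ, Set.singleton_inter_eq_empty.2 hσ]
    simp


lemma condexp_low (l : ℕ) (h : l ≤ n) (j : Fin n) (hj : (j : ℕ) < l) :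
    (permMeasure n)[(fun τ => v (τ j) ^ 2) | sampleFiltration n l h v]
      = fun σ => v (σ j) ^ 2 :=
  condExp_of_stronglyMeasurable le_top
    ((meas_coord v l h j hj).stronglyMeasurable) Integrable.of_finite

lemma card_filter_le (l : ℕ) (hln : l < n) :
    (univ.filter (fun k : Fin n => l ≤ (k : ℕ))).card = n - l := by
  have heq : univ.filter (fun k : Fin n => l ≤ (k : ℕ)) = Finset.Ici (⟨l, hln⟩ : Fin n) := by
    ext k
    simp [Fin.le_def]
  rw [heq, Fin.card_Ici]

lemma condexp_high (hsq : ∑ j, v j ^ 2 = 1) (l : ℕ) (h : l ≤ n) (j : Fin n)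
    (hj : l ≤ (j : ℕ)) :
    glow v l =ᵐ[permMeasure n]
      (permMeasure n)[(fun τ => v (τ j) ^ 2) | sampleFiltration n l h v] := by
  have hln : l < n := lt_of_le_of_lt hj j.isLt
  have hd : ((n : ℝ) - l) ≠ 0 := by
    have : (l : ℝ) < n := by exact_mod_cast hln
    linarith
  refine ae_eq_condExp_of_forall_setIntegral_eq le_top Integrable.of_finite
    (fun s _ _ => Integrable.of_finite.integrableOn) (fun s hs _ => ?_) ?_
  · rw [setIntegral_eq_sum, setIntegral_eq_sum]
    congr 1
    have hone : ∀ σ : Equiv.Perm (Fin n),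
        1 - ∑ k ∈ univ.filter (fun k : Fin n => (k : ℕ) < l), v (σ k) ^ 2
          = ∑ k ∈ univ.filter (fun k : Fin n => l ≤ (k : ℕ)), v (σ k) ^ 2 := by
      intro σ
      have htot : ∑ k : Fin n, v (σ k) ^ 2 = 1 := by
        rw [← hsq]
        exact Equiv.sum_comp σ (fun k => v k ^ 2)
      have hsplit := Finset.sum_filter_add_sum_filter_not univ
        (fun k : Fin n => (k : ℕ) < l) (fun k => v (σ k) ^ 2)
      have hcongr : univ.filter (fun k : Fin n => ¬ (k : ℕ) < l)
          = univ.filter (fun k : Fin n => l ≤ (k : ℕ)) := by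
        apply Finset.filter_congr
        intro k _
        simp [not_lt]
      rw [hcongr, htot] at hsplit
      linarith
    calc ∑ σ ∈ univ.filter (· ∈ s), glow v l σ
        = (∑ σ ∈ univ.filter (· ∈ s),
            ∑ k ∈ univ.filter (fun k : Fin n => l ≤ (k : ℕ)), v (σ k) ^ 2) / ((n:ℝ) - l) := by
          rw [Finset.sum_div]
          exact Finset.sum_congr rfl fun σ _ => by rw [glow, hone σ]
      _ = (∑ k ∈ univ.filter (fun k : Fin n => l ≤ (k : ℕ)),
            ∑ σ ∈ univ.filter (· ∈ s), v (σ k) ^ 2) / ((n:ℝ) - l) := by rw [Finset.sum_comm]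
      _ = (∑ k ∈ univ.filter (fun k : Fin n => l ≤ (k : ℕ)),
            ∑ σ ∈ univ.filter (· ∈ s), v (σ j) ^ 2) / ((n:ℝ) - l) := by
            congr 1
            exact Finset.sum_congr rfl fun k hk =>
              sum_swap_eq v hs k j (by simpa using hk) hj
      _ = ∑ σ ∈ univ.filter (· ∈ s), v (σ j) ^ 2 := by
            rw [Finset.sum_const, card_filter_le l hln, nsmul_eq_mul,
              Nat.cast_sub (le_of_lt hln)]
            field_simp
  · exact StronglyMeasurable.aestronglyMeasurable ((meas_glow v l h).stronglyMeasurable)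

end MDQDAux

open MDQDAux

/-- Let `B` be an `n×n` complex matrix and `(x_1,...,x_n)` a uniformly
random permutation of deterministic reals `v_1,...,v_n` with `∑ v_j² = 1`, and
`F_l = σ(x_1,...,x_l)`. Define `N_l = ∑_{j=1}^n B_{jj}(E[x_j²|F_l] − E[x_j²|F_{l−1}])`.
Then for `1 ≤ l ≤ n−1`,
`N_l = (B_{ll} − (1/(n−l)) ∑_{j=l+1}^n B_{jj}) · (x_l² − (1 − ∑_{k=1}^{l−1} x_k²)/(n−l+1))`
(indices `1`-indexed; a `1`-indexed index `r` corresponds to `⟨r−1, _⟩ : Fin n`). -/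
theorem martingale_difference_quadratic_diagonal
    (n l : ℕ) (hl1 : 1 ≤ l) (hl2 : l < n) (B : Matrix (Fin n) (Fin n) ℂ)
    (v : Fin n → ℝ) (hsq : ∑ j, v j ^ 2 = 1) :
    (fun σ => ∑ j : Fin n, B j j *
        ((((permMeasure n)[(fun τ => v (τ j) ^ 2) |
            sampleFiltration n l (by omega) v]) σ : ℂ)
          - (((permMeasure n)[(fun τ => v (τ j) ^ 2) |
            sampleFiltration n (l - 1) (by omega) v]) σ : ℂ)))
      =ᵐ[permMeasure n]
      fun σ => (B ⟨l - 1, by omega⟩ ⟨l - 1, by omega⟩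
          - (∑ j ∈ univ.filter (fun j : Fin n => l ≤ (j : ℕ)), B j j) / ((n : ℂ) - l))
        * ((v (σ ⟨l - 1, by omega⟩) ^ 2 : ℂ)
          - ((1 : ℂ) - ∑ k ∈ univ.filter (fun k : Fin n => (k : ℕ) + 1 < l),
              (v (σ k) ^ 2 : ℂ)) / ((n : ℂ) - l + 1)) := by
  classical
  have hln : l ≤ n := le_of_lt hl2
  have hl1n : l - 1 ≤ n := by omega
  set jL : Fin n := ⟨l - 1, by omega⟩ with hjL
  -- a.e. identification of the conditional expectations
  have hhigh1 : ∀ᵐ σ ∂permMeasure n, ∀ j : Fin n, l ≤ (j : ℕ) →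
      ((permMeasure n)[(fun τ => v (τ j) ^ 2) | sampleFiltration n l hln v]) σ
        = glow v l σ := by
    rw [ae_all_iff]
    intro j
    by_cases hj : l ≤ (j : ℕ)
    · filter_upwards [condexp_high v hsq l hln j hj] with σ hσ
      exact fun _ => hσ.symm
    · exact Filter.Eventually.of_forall fun σ hc => absurd hc hj
  have hhigh2 : ∀ᵐ σ ∂permMeasure n, ∀ j : Fin n, l - 1 ≤ (j : ℕ) →
      ((permMeasure n)[(fun τ => v (τ j) ^ 2) | sampleFiltration n (l - 1) hl1n v]) σ
        = glow v (l - 1) σ := by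
    rw [ae_all_iff]
    intro j
    by_cases hj : l - 1 ≤ (j : ℕ)
    · filter_upwards [condexp_high v hsq (l - 1) hl1n j hj] with σ hσ
      exact fun _ => hσ.symm
    · exact Filter.Eventually.of_forall fun σ hc => absurd hc hj
  filter_upwards [hhigh1, hhigh2] with σ e1 e2
  -- notation
  set S : ℂ := ∑ j ∈ univ.filter (fun j : Fin n => l ≤ (j : ℕ)), B j j with hS
  set x : ℝ := v (σ jL) ^ 2 with hx
  set R : ℝ := ∑ k ∈ univ.filter (fun k : Fin n => (k : ℕ) < l - 1), v (σ k) ^ 2 with hR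
  -- rewrite each summand
  have key : ∀ j ∈ (univ : Finset (Fin n)), B j j *
        ((((permMeasure n)[(fun τ => v (τ j) ^ 2) |
            sampleFiltration n l (by omega : l ≤ n) v]) σ : ℂ)
          - (((permMeasure n)[(fun τ => v (τ j) ^ 2) |
            sampleFiltration n (l - 1) (by omega : l - 1 ≤ n) v]) σ : ℂ))
      = (if j = jL then B j j * ((x : ℂ) - ((glow v (l - 1) σ : ℝ) : ℂ)) else 0)
        + (if l ≤ (j : ℕ) then
            B j j * (((glow v l σ : ℝ) : ℂ) - ((glow v (l - 1) σ : ℝ) : ℂ)) else 0) := by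
    intro j _
    by_cases h1 : (j : ℕ) < l - 1
    · have hc1 : ((permMeasure n)[(fun τ => v (τ j) ^ 2) |
          sampleFiltration n l hln v]) σ = v (σ j) ^ 2 :=
        congrFun (condexp_low v l hln j (by omega)) σ
      have hc2 : ((permMeasure n)[(fun τ => v (τ j) ^ 2) |
          sampleFiltration n (l - 1) hl1n v]) σ = v (σ j) ^ 2 :=
        congrFun (condexp_low v (l - 1) hl1n j h1) σ
      have hne : j ≠ jL := by
        intro e
        rw [e] at h1
        simp [hjL] at h1
      rw [hc1, hc2, if_neg hne, if_neg (by omega)]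
      simp
    · by_cases h2 : (j : ℕ) = l - 1
      · have hje : j = jL := Fin.ext (by simpa using h2)
        have hc1 : ((permMeasure n)[(fun τ => v (τ j) ^ 2) |
            sampleFiltration n l hln v]) σ = v (σ j) ^ 2 :=
          congrFun (condexp_low v l hln j (by omega)) σ
        have hc2 : ((permMeasure n)[(fun τ => v (τ j) ^ 2) |
            sampleFiltration n (l - 1) hl1n v]) σ = glow v (l - 1) σ :=
          e2 j (by omega)
        rw [hc1, hc2, if_pos hje, if_neg (by omega), hje]
        simp [hx]
      · have hj : l ≤ (j : ℕ) := by omega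
        have hc1 : ((permMeasure n)[(fun τ => v (τ j) ^ 2) |
            sampleFiltration n l hln v]) σ = glow v l σ := e1 j hj
        have hc2 : ((permMeasure n)[(fun τ => v (τ j) ^ 2) |
            sampleFiltration n (l - 1) hl1n v]) σ = glow v (l - 1) σ :=
          e2 j (by omega)
        have hne : j ≠ jL := by
          intro e
          have := congrArg Fin.val e
          simp [hjL] at this
          omega
        rw [hc1, hc2, if_neg hne, if_pos hj]
        simp
  rw [Finset.sum_congr rfl key, Finset.sum_add_distrib, Finset.sum_ite_eq' univ jL,
    if_pos (mem_univ jL), ← Finset.sum_filter, ← Finset.sum_mul]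
  -- cast computations
  have hdn : ((n : ℂ) - l) ≠ 0 := by
    have : (l : ℂ) ≠ (n : ℂ) := by exact_mod_cast Nat.ne_of_lt hl2
    exact sub_ne_zero.2 (Ne.symm this)
  have hdn1 : ((n : ℂ) - l + 1) ≠ 0 := by
    have h1 : ((n - l + 1 : ℕ) : ℂ) ≠ 0 := Nat.cast_ne_zero.2 (by omega)
    have h2 : ((n - l + 1 : ℕ) : ℂ) = (n : ℂ) - l + 1 := by
      push_cast [Nat.cast_sub hln]
      ring
    rw [h2] at h1
    exact h1
  have hfc : univ.filter (fun k : Fin n => (k : ℕ) + 1 < l)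
      = univ.filter (fun k : Fin n => (k : ℕ) < l - 1) := by
    apply Finset.filter_congr
    intro k _
    constructor <;> omega
  have hRC : ∑ k ∈ univ.filter (fun k : Fin n => (k : ℕ) + 1 < l),
      ((v (σ k) : ℂ)) ^ 2 = ((R : ℝ) : ℂ) := by
    rw [hfc, hR]
    push_cast
    rfl
  have hxc : ((v (σ jL) : ℂ)) ^ 2 = ((x : ℝ) : ℂ) := by
    rw [hx]
    push_cast
    rfl
  have hcast1 : ((glow v (l - 1) σ : ℝ) : ℂ) = (1 - (R : ℂ)) / ((n : ℂ) - l + 1) := by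
    rw [glow, ← hR]
    push_cast [Nat.cast_sub hl1]
    ring_nf
  have hins : univ.filter (fun k : Fin n => (k : ℕ) < l)
      = insert jL (univ.filter (fun k : Fin n => (k : ℕ) < l - 1)) := by
    ext k
    simp only [mem_filter, mem_univ, true_and, Finset.mem_insert, Fin.ext_iff, hjL]
    omega
  have hnotmem : jL ∉ univ.filter (fun k : Fin n => (k : ℕ) < l - 1) := by
    simp [hjL]
  have hsuml : ∑ k ∈ univ.filter (fun k : Fin n => (k : ℕ) < l), v (σ k) ^ 2 = x + R := by
    rw [hins, Finset.sum_insert hnotmem, ← hx, ← hR]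
  have hcast2 : ((glow v l σ : ℝ) : ℂ) = (1 - (R : ℂ) - (x : ℂ)) / ((n : ℂ) - l) := by
    rw [glow, hsuml]
    push_cast
    ring_nf
  rw [hcast1, hcast2, hxc, hRC, ← hS]
  field_simp
  ring
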